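/- Let V, L ∈ ℝ^{d×k} be matrices whose columns are the initial and limit perturbation responses of linear drifts f_{q_i}(x) = A x + b + c_{q_i}, i.e., the i-th column of V is b + c_{q_i} and the i-th column of L is the fixed point of f_{q_i}, with A invertible. If L has full row rank (rank d), then -V L⁺ = A, where L⁺ is the Moore–Penrose pseudoinverse of L. -/

import Mathlib

/-!
Column by column, the limit responses are `L = -A⁻¹ V`, i.e. `A L = -V`, so `-V L⁺ = A (L L⁺)`.
The first Penrose condition gives `(L L⁺ - 1) L = 0`, so `rank (L L⁺ - 1) + rank L ≤ d`; full row
rank then forces `L L⁺ = 1`.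
-/

open Matrix

/-- The four Penrose conditions characterizing the Moore–Penrose pseudoinverse. -/
def IsMoorePenroseInv {d k : ℕ} (L : Matrix (Fin d) (Fin k) ℝ)
    (Lp : Matrix (Fin k) (Fin d) ℝ) : Prop :=
  L * Lp * L = L ∧ Lp * L * Lp = Lp ∧ (L * Lp)ᵀ = L * Lp ∧ (Lp * L)ᵀ = Lp * L

theorem Matrix.eq_zero_of_rank_eq_zero {m n K : Type*} [Fintype n] [DecidableEq n] [Field K]
    {M : Matrix m n K} (h : M.rank = 0) : M = 0 := by
  rw [rank, Submodule.finrank_eq_zero, LinearMap.range_eq_bot] at h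
  exact Matrix.toLin'.injective (by rwa [map_zero, toLin'_apply'])

theorem Matrix.mul_eq_one_of_mul_mul_eq_of_rank_eq_card {m n K : Type*} [Fintype m] [Fintype n]
    [DecidableEq m] [Field K] {L : Matrix m n K} {X : Matrix n m K}
    (hLXL : L * X * L = L) (hrank : L.rank = Fintype.card m) : L * X = 1 := by
  have hker : (L * X - 1) * L = 0 := by rw [Matrix.sub_mul, hLXL, Matrix.one_mul, sub_self]
  have := rank_add_rank_le_card_of_mul_eq_zero hker
  exact sub_eq_zero.mp (eq_zero_of_rank_eq_zero (by omega))

theorem Matrix.eq_neg_mul_of_col_eq_neg_mulVec {m n o R : Type*} [Fintype n] [CommRing R]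
    (M : Matrix m n R) (v : o → n → R) {V : Matrix n o R} {L : Matrix m o R}
    (hV : ∀ r i, V r i = v i r) (hL : ∀ r i, L r i = (-(M *ᵥ v i)) r) : L = -(M * V) := by
  ext r i
  rw [hL, neg_apply, Pi.neg_apply, mul_apply, mulVec, dotProduct]
  simp only [hV]

/-- If the columns of `V` are the initial perturbation responses `b + c_i`
and the columns of `L` are the limit perturbation responses (fixed points
`-A⁻¹(b + c_i)`) of the linear drifts `f_{q_i}(x) = A x + b + c_{q_i}` with `A`
invertible, and `L` has full row rank `d`, then `-V L⁺ = A`. -/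
theorem stmt_2 {d k : ℕ} (A : Matrix (Fin d) (Fin d) ℝ) (b : Fin d → ℝ)
    (c : Fin k → (Fin d → ℝ))
    (V L : Matrix (Fin d) (Fin k) ℝ) (Lp : Matrix (Fin k) (Fin d) ℝ)
    (hA : IsUnit A.det)
    (hV : ∀ r i, V r i = (b + c i) r)
    (hL : ∀ r i, L r i = (-(A⁻¹.mulVec (b + c i))) r)
    (hLp : IsMoorePenroseInv L Lp)
    (hrank : L.rank = d) :
    -V * Lp = A := by
  have hAL : A * L = -V := by
    rw [eq_neg_mul_of_col_eq_neg_mulVec A⁻¹ (fun i ↦ b + c i) hV hL, Matrix.mul_neg,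
      ← Matrix.mul_assoc, mul_nonsing_inv A hA, Matrix.one_mul]
  have hLLp : L * Lp = 1 :=
    mul_eq_one_of_mul_mul_eq_of_rank_eq_card hLp.1 (by rw [hrank, Fintype.card_fin])
  calc -V * Lp = A * (L * Lp) := by rw [← hAL, Matrix.mul_assoc]
    _ = A := by rw [hLLp, Matrix.mul_one]
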